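/- arXiv:1204.5074 — 2 statements merged into one kernel-verified Lean document; each statement's English description precedes it below -/
import Mathlib

section
/- Let n ≥ 2, q ≥ 1 and 0 ≤ k ≤ n−2. Let G = F₀ ⊗ E_k^{(n−2)} (a q^{n−1} × q^n matrix with rows indexed by (z,w) ∈ [q] × [q]^{n−2} and columns indexed by [q]^n). Then Σ_{1 ≤ a < b ≤ n} (G_{a,b})ᵀ G_{a,b} = ((n−k)(n−k−1)/2) · E_k^{(n)}. -/
noncomputable section

namespace ED

/-- The `q × q` matrix all of whose entries are `1/q`. -/
def E0 (q : ℕ) : Matrix (Fin q) (Fin q) ℝ := Matrix.of fun _ _ => 1 / q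

/-- `E₁ = I - E₀`. -/
def E1 (q : ℕ) : Matrix (Fin q) (Fin q) ℝ :=
  Matrix.of fun x y => (if x = y then 1 else 0) - 1 / q

/-- The projector `E_k^{(m)}` of the Hamming association scheme. -/
def Ek (q m k : ℕ) : Matrix (Fin m → Fin q) (Fin m → Fin q) ℝ :=
  Matrix.of fun x y => ∑ S ∈ Finset.powersetCard k (Finset.univ : Finset (Fin m)),
    ∏ i, (if i ∈ S then E1 q (x i) (y i) else E0 q (x i) (y i))

/-- The `q × q²` matrix with all entries `q^{-3/2}`. -/
def F0 (q : ℕ) : Matrix (Fin q) (Fin q × Fin q) ℝ :=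
  Matrix.of fun _ _ => ((q : ℝ) * Real.sqrt q)⁻¹

/-- The `q × q²` matrix with entries `q^{-1/2}((E₁)_{x,y₁} + (E₁)_{x,y₂})`. -/
def F1 (q : ℕ) : Matrix (Fin q) (Fin q × Fin q) ℝ :=
  Matrix.of fun x y => (Real.sqrt q)⁻¹ * (E1 q x y.1 + E1 q x y.2)

/-- `F = F₀ + F₁`. -/
def FF (q : ℕ) : Matrix (Fin q) (Fin q × Fin q) ℝ := F0 q + F1 q

/-- The increasing enumeration of `[n] \ {a,b}`. -/
def embCompl {n : ℕ} (a b : Fin n) (h : a ≠ b) : Fin (n - 2) → Fin n :=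
  fun i => (({a, b}ᶜ : Finset (Fin n)).orderIsoOfFin
    (by rw [Finset.card_compl, Finset.card_pair h, Fintype.card_fin]) i : Fin n)

/-- For a `q^{n-1} × q^n` matrix `G` (rows indexed by `[q] × [q]^{n-2}`, columns by
`([q] × [q]) × [q]^{n-2}`), the matrix `G_{a,b}` with rows indexed by strings
`x ∈ [q]^n` with `x a = x b`, and columns by `[q]^n`. -/
def subMat {n q : ℕ}
    (G : Matrix (Fin q × (Fin (n - 2) → Fin q)) ((Fin q × Fin q) × (Fin (n - 2) → Fin q)) ℝ)
    (a b : Fin n) (h : a ≠ b) :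
    Matrix {x : Fin n → Fin q // x a = x b} (Fin n → Fin q) ℝ :=
  Matrix.of fun x y =>
    G (x.1 a, fun i => x.1 (embCompl a b h i)) ((y a, y b), fun i => y (embCompl a b h i))

/-- The spectral norm (largest singular value) of a real matrix. -/
def specNorm {m n : Type*} [Fintype m] [Fintype n] [DecidableEq n] (A : Matrix m n ℝ) : ℝ :=
  ‖LinearMap.toContinuousLinearMap (Matrix.toEuclideanLin A)‖

end ED

namespace ED

/-- The tensor product `A ⊗ E_k^{(n-2)}` of a `q × q²` matrix `A` with `E_k^{(n-2)}`:
a `q^{n-1} × q^n` matrix with rows indexed by `[q] × [q]^{n-2}` and columns by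
`([q] × [q]) × [q]^{n-2}`. -/
def tens (n q : ℕ) (A : Matrix (Fin q) (Fin q × Fin q) ℝ) (k : ℕ) :
    Matrix (Fin q × (Fin (n - 2) → Fin q)) ((Fin q × Fin q) × (Fin (n - 2) → Fin q)) ℝ :=
  Matrix.of fun r c => A r.1 c.1 * Ek q (n - 2) k r.2 c.2

end ED

/-!
With `G = F₀ ⊗ E_k^{(n-2)}`, the Kronecker rules give `GᵀG = F₀ᵀF₀ ⊗ E_kᵀE_k = (E₀ ⊗ E₀) ⊗ E_k^{(n-2)}`,
since `E_k` is a symmetric idempotent (the product projectors `A_1 ⊗ ⋯ ⊗ A_m` are mutually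
orthogonal because `E₀E₁ = E₁E₀ = 0`). Summing over the rows with `x a = x b` reindexes
`G_{a,b}ᵀG_{a,b}` as `GᵀG` evaluated at the restrictions of `y, y'`, which is exactly the sum of
the product projectors of `E_k^{(n)}` whose support `S` avoids `a` and `b`. Summing over
`a < b`, each `S` with `|S| = k` is counted once per pair in its complement, i.e.
`C(n - k, 2)` times.
-/

namespace ED

open Matrix Finset
open scoped Kronecker

theorem E0_mul_E0 (q : ℕ) : E0 q * E0 q = E0 q := by
  rcases Nat.eq_zero_or_pos q with rfl | hq
  · exact Subsingleton.elim _ _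
  ext x y
  simp [E0, mul_apply]
  field_simp

theorem E1_eq_one_sub_E0 (q : ℕ) : E1 q = 1 - E0 q := by
  ext x y
  simp [E1, E0, one_apply]

theorem E0_mul_E1 (q : ℕ) : E0 q * E1 q = 0 := by
  rw [E1_eq_one_sub_E0, mul_sub, mul_one, E0_mul_E0, sub_self]

theorem E1_mul_E0 (q : ℕ) : E1 q * E0 q = 0 := by
  rw [E1_eq_one_sub_E0, sub_mul, one_mul, E0_mul_E0, sub_self]

theorem E1_mul_E1 (q : ℕ) : E1 q * E1 q = E1 q := by
  rw [E1_eq_one_sub_E0, sub_mul, one_mul, mul_sub, mul_one, E0_mul_E0, sub_self, sub_zero]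

theorem F0_transpose_mul_F0 (q : ℕ) : (F0 q)ᵀ * F0 q = E0 q ⊗ₖ E0 q := by
  rcases Nat.eq_zero_or_pos q with rfl | hq
  · exact Subsingleton.elim _ _
  ext x y
  simp [F0, E0, mul_apply]
  field_simp
  exact (Real.sq_sqrt q.cast_nonneg).symm

/-- The summand `A_1 ⊗ ⋯ ⊗ A_m` of `E_k^{(m)}` indexed by `S`. -/
def prodProj (q : ℕ) {m : ℕ} (S : Finset (Fin m)) : Matrix (Fin m → Fin q) (Fin m → Fin q) ℝ :=
  Matrix.of fun x y => ∏ i, if i ∈ S then E1 q (x i) (y i) else E0 q (x i) (y i)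

theorem Ek_eq_sum_prodProj (q m k : ℕ) :
    Ek q m k = ∑ S ∈ powersetCard k univ, prodProj q S := by
  ext x y
  simp only [Ek, prodProj, Matrix.sum_apply, of_apply]

theorem prodProj_mul_prodProj (q : ℕ) {m : ℕ} (S T : Finset (Fin m)) :
    prodProj q S * prodProj q T = if S = T then prodProj q S else 0 := by
  ext x y
  have hfactor : ∀ i, ∑ z, (if i ∈ S then E1 q (x i) z else E0 q (x i) z) *
      (if i ∈ T then E1 q z (y i) else E0 q z (y i)) =
        if (i ∈ S ↔ i ∈ T) then (if i ∈ S then E1 q (x i) (y i) else E0 q (x i) (y i))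
        else 0 := by
    intro i
    by_cases hS : i ∈ S <;> by_cases hT : i ∈ T <;>
      simp [hS, hT, ← mul_apply, E0_mul_E0, E0_mul_E1, E1_mul_E0, E1_mul_E1]
  simp only [prodProj, mul_apply, of_apply, ← prod_mul_distrib]
  rw [← Fintype.prod_sum (fun i z => (if i ∈ S then E1 q (x i) z else E0 q (x i) z) *
      (if i ∈ T then E1 q z (y i) else E0 q z (y i)))]
  simp only [hfactor]
  split_ifs with hST
  · subst hST
    simp
  · obtain ⟨i, hi⟩ := not_forall.1 (mt Finset.ext hST)
    exact prod_eq_zero (mem_univ i) (if_neg hi)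

theorem Ek_mul_Ek (q m k : ℕ) : Ek q m k * Ek q m k = Ek q m k := by
  simp only [Ek_eq_sum_prodProj, sum_mul_sum, prodProj_mul_prodProj]
  exact sum_congr rfl fun S hS => by rw [sum_ite_eq, if_pos hS]

theorem Ek_transpose (q m k : ℕ) : (Ek q m k)ᵀ = Ek q m k := by
  ext x y
  simp [Ek, E0, E1, eq_comm]

theorem prodProj_map (q : ℕ) {m n : ℕ} (e : Fin m ↪ Fin n) (S : Finset (Fin m))
    (x y : Fin n → Fin q) :
    prodProj q (S.map e) x y =
      (∏ j ∈ (univ.map e)ᶜ, E0 q (x j) (y j)) * prodProj q S (x ∘ e) (y ∘ e) := by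
  simp only [prodProj, of_apply]
  rw [← prod_compl_mul_prod (univ.map e), prod_map]
  congr 1
  · refine prod_congr rfl fun j hj => if_neg fun hjS => ?_
    exact mem_compl.1 hj (map_subset_map.2 (subset_univ S) hjS)
  · simp only [mem_map' e, Function.comp_apply]

theorem sum_powersetCard_map_prodProj (q k : ℕ) {m n : ℕ} (e : Fin m ↪ Fin n)
    (x y : Fin n → Fin q) :
    ∑ T ∈ powersetCard k (univ.map e), prodProj q T x y =
      (∏ j ∈ (univ.map e)ᶜ, E0 q (x j) (y j)) * Ek q m k (x ∘ e) (y ∘ e) := by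
  rw [powersetCard_map, sum_map, Ek_eq_sum_prodProj, Matrix.sum_apply, mul_sum]
  exact sum_congr rfl fun S _ => prodProj_map q e S x y

theorem card_compl_pair {n : ℕ} {a b : Fin n} (h : a ≠ b) :
    ({a, b}ᶜ : Finset (Fin n)).card = n - 2 := by
  rw [card_compl, card_pair h, Fintype.card_fin]

theorem coe_orderEmbOfFin_compl_pair {n : ℕ} {a b : Fin n} (h : a ≠ b) :
    ⇑(({a, b}ᶜ : Finset (Fin n)).orderEmbOfFin (card_compl_pair h)) = embCompl a b h :=
  rfl

theorem embCompl_injective {n : ℕ} {a b : Fin n} (h : a ≠ b) :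
    Function.Injective (embCompl a b h) := by
  rw [← coe_orderEmbOfFin_compl_pair h]
  exact (orderEmbOfFin _ _).injective

theorem mem_range_embCompl {n : ℕ} {a b : Fin n} (h : a ≠ b) (j : Fin n) :
    j ∈ Set.range (embCompl a b h) ↔ j ≠ a ∧ j ≠ b := by
  rw [← coe_orderEmbOfFin_compl_pair h, range_orderEmbOfFin]
  simp only [mem_coe, mem_compl, mem_insert, mem_singleton, not_or]

theorem left_notMem_range_embCompl {n : ℕ} {a b : Fin n} (h : a ≠ b) :
    a ∉ Set.range (embCompl a b h) :=
  fun ha => ((mem_range_embCompl h a).1 ha).1 rfl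

theorem right_notMem_range_embCompl {n : ℕ} {a b : Fin n} (h : a ≠ b) :
    b ∉ Set.range (embCompl a b h) :=
  fun hb => ((mem_range_embCompl h b).1 hb).2 rfl

def diagEquiv {n : ℕ} {a b : Fin n} (h : a ≠ b) (q : ℕ) :
    {x : Fin n → Fin q // x a = x b} ≃ Fin q × (Fin (n - 2) → Fin q) where
  toFun x := (x.1 a, x.1 ∘ embCompl a b h)
  invFun p := ⟨Function.extend (embCompl a b h) p.2 fun _ => p.1, by
    rw [Function.extend_apply' _ _ _ (left_notMem_range_embCompl h),
      Function.extend_apply' _ _ _ (right_notMem_range_embCompl h)]⟩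
  left_inv x := by
    ext j : 2
    change Function.extend (embCompl a b h) (x.1 ∘ embCompl a b h) (fun _ => x.1 a) j = x.1 j
    by_cases hj : j ∈ Set.range (embCompl a b h)
    · obtain ⟨i, rfl⟩ := hj
      exact (embCompl_injective h).extend_apply _ _ i
    · rw [Function.extend_apply' _ _ _ hj]
      rcases not_and_or.1 ((mem_range_embCompl h j).not.1 hj) with hja | hjb
      · rw [not_ne_iff.1 hja]
      · rw [not_ne_iff.1 hjb, x.2]
  right_inv p := by
    refine Prod.ext ?_ (funext fun i => ?_)
    · change Function.extend (embCompl a b h) p.2 (fun _ => p.1) a = p.1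
      exact Function.extend_apply' _ _ _ (left_notMem_range_embCompl h)
    · change Function.extend (embCompl a b h) p.2 (fun _ => p.1) (embCompl a b h i) = p.2 i
      exact (embCompl_injective h).extend_apply _ _ i

theorem transpose_subMat_mul_subMat {n q : ℕ}
    (G : Matrix (Fin q × (Fin (n - 2) → Fin q)) ((Fin q × Fin q) × (Fin (n - 2) → Fin q)) ℝ)
    {a b : Fin n} (h : a ≠ b) (y y' : Fin n → Fin q) :
    ((subMat G a b h)ᵀ * subMat G a b h) y y' =
      (Gᵀ * G) ((y a, y b), y ∘ embCompl a b h) ((y' a, y' b), y' ∘ embCompl a b h) := by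
  simp only [mul_apply, transpose_apply]
  exact Fintype.sum_equiv (diagEquiv h q) _ _ fun _ => rfl

theorem tens_F0_transpose_mul_self (n q k : ℕ) :
    (tens n q (F0 q) k)ᵀ * tens n q (F0 q) k = (E0 q ⊗ₖ E0 q) ⊗ₖ Ek q (n - 2) k := by
  change (F0 q ⊗ₖ Ek q (n - 2) k)ᵀ * (F0 q ⊗ₖ Ek q (n - 2) k) = _
  rw [← kroneckerMap_transpose, ← mul_kronecker_mul, F0_transpose_mul_F0, Ek_transpose,
    Ek_mul_Ek]

theorem transpose_subMat_mul_subMat_tens_F0 {n q : ℕ} (k : ℕ) {a b : Fin n} (h : a ≠ b) :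
    (subMat (tens n q (F0 q) k) a b h)ᵀ * subMat (tens n q (F0 q) k) a b h =
      ∑ T ∈ powersetCard k {a, b}ᶜ, prodProj q T := by
  ext y y'
  rw [transpose_subMat_mul_subMat, tens_F0_transpose_mul_self, Matrix.sum_apply,
    ← map_orderEmbOfFin_univ _ (card_compl_pair h), sum_powersetCard_map_prodProj,
    map_orderEmbOfFin_univ, compl_compl, prod_pair h]
  rfl

theorem sum_lt_sum_powersetCard_compl_pair {M : Type*} [AddCommMonoid M] (n k : ℕ)
    (f : Finset (Fin n) → M) :
    ∑ a : Fin n, ∑ b : Fin n, (if a < b then ∑ T ∈ powersetCard k {a, b}ᶜ, f T else 0) =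
      ∑ T ∈ powersetCard k univ, (n - k).choose 2 • f T := by
  have hrestrict : ∀ a b : Fin n, (if a < b then ∑ T ∈ powersetCard k {a, b}ᶜ, f T else 0) =
      ∑ T ∈ powersetCard k univ, if a < b ∧ a ∉ T ∧ b ∉ T then f T else 0 := by
    intro a b
    rw [← sum_filter]
    split_ifs with hab
    · congr 1
      ext T
      simp only [mem_powersetCard, mem_filter, subset_univ, true_and,
        subset_compl_iff_disjoint_right, disjoint_insert_right, disjoint_singleton_right, hab]
      tauto
    · simp [hab]
  simp only [hrestrict]
  rw [← Fintype.sum_prod_type', sum_comm]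
  refine sum_congr rfl fun T hT => ?_
  have hpairs : ({p | p.1 < p.2 ∧ p.1 ∉ T ∧ p.2 ∉ T} : Finset (Fin n × Fin n)) =
      {p ∈ Tᶜ ×ˢ Tᶜ | p.1 < p.2} := by
    ext p
    simp only [mem_filter, mem_product, mem_univ, mem_compl, true_and]
    tauto
  rw [← sum_filter, sum_const, hpairs, card_product_filter_lt, card_compl, Fintype.card_fin,
    (mem_powersetCard.1 hT).2]

end ED

open Matrix ED in
theorem stmt4_general (n q k : ℕ) :
    (∑ a : Fin n, ∑ b : Fin n,
        if h : a < b then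
          (subMat (tens n q (F0 q) k) a b h.ne)ᵀ * subMat (tens n q (F0 q) k) a b h.ne
        else 0)
      = (((n : ℝ) - k) * ((n : ℝ) - k - 1) / 2) • Ek q n k := by
  have hpair : ∀ a b : Fin n,
      (if h : a < b then
          (subMat (tens n q (F0 q) k) a b h.ne)ᵀ * subMat (tens n q (F0 q) k) a b h.ne
        else 0) = if a < b then ∑ T ∈ Finset.powersetCard k {a, b}ᶜ, prodProj q T else 0 := by
    intro a b
    split_ifs with hab
    exacts [transpose_subMat_mul_subMat_tens_F0 k hab.ne, rfl]
  rw [Fintype.sum_congr _ _ fun a => Fintype.sum_congr _ _ (hpair a),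
    sum_lt_sum_powersetCard_compl_pair, Ek_eq_sum_prodProj, Finset.smul_sum]
  refine Finset.sum_congr rfl fun T hT => ?_
  have hkn : k ≤ n := by simpa [(Finset.mem_powersetCard.1 hT).2] using Finset.card_le_univ T
  rw [← Nat.cast_smul_eq_nsmul ℝ, Nat.cast_choose_two, Nat.cast_sub hkn]

open Matrix ED in
/-- For `G = F₀ ⊗ E_k^{(n−2)}`, one has
`Σ_{1 ≤ a < b ≤ n} (G_{a,b})ᵀ G_{a,b} = ((n−k)(n−k−1)/2) · E_k^{(n)}`. -/
theorem stmt4 (n q k : ℕ) (hn : 2 ≤ n) (hq : 1 ≤ q) (hk : k ≤ n - 2) :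
    (∑ a : Fin n, ∑ b : Fin n,
        if h : a < b then
          (subMat (tens n q (F0 q) k) a b h.ne)ᵀ * subMat (tens n q (F0 q) k) a b h.ne
        else 0)
      = (((n : ℝ) - k) * ((n : ℝ) - k - 1) / 2) • Ek q n k :=
  stmt4_general n q k
end
end

section
/- Let n ≥ 2, q ≥ 1, and let α₀, α₁, …, α_{n−2} be real numbers. Let G = Σ_{k=0}^{n−2} α_k (F ⊗ E_k^{(n−2)}) and let Γ′ be the (C(n,2)·q^{n−1}) × q^n matrix obtained by stacking the matrices G_{a,b} over all pairs 1 ≤ a < b ≤ n. Let u ∈ ℝ^{q^n} be the unit vector with all entries equal to q^{−n/2}. Then ‖Γ′ u‖₂ = |α₀| · √(n(n−1)/2); in particular ‖Γ′‖ ≥ |α₀| · √(n(n−1)/2). -/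
noncomputable section

namespace ED

/-- The matrix `Γ′` obtained by stacking the matrices `G_{a,b}` over all pairs `a < b`. -/
def stacked {n q : ℕ}
    (G : Matrix (Fin q × (Fin (n - 2) → Fin q)) ((Fin q × Fin q) × (Fin (n - 2) → Fin q)) ℝ) :
    Matrix ((p : {p : Fin n × Fin n // p.1 < p.2}) ×
      {x : Fin n → Fin q // x p.1.1 = x p.1.2}) (Fin n → Fin q) ℝ :=
  Matrix.of fun r y => subMat G r.1.1.1 r.1.1.2 (ne_of_lt r.1.2) r.2 y

end ED

namespace ED

-- row sum lemmas
lemma sum_E1 (q : ℕ) (hq : 1 ≤ q) (x : Fin q) : ∑ y, E1 q x y = 0 := by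
  have hq0 : (q : ℝ) ≠ 0 := by positivity
  simp [E1, Finset.sum_sub_distrib, Finset.sum_ite_eq, hq0]

lemma sum_E0 (q : ℕ) (hq : 1 ≤ q) (x : Fin q) : ∑ y, E0 q x y = 1 := by
  have hq0 : (q : ℝ) ≠ 0 := by positivity
  simp [E0, Finset.sum_const, hq0]

lemma sum_FF (q : ℕ) (hq : 1 ≤ q) (x : Fin q) : ∑ c : Fin q × Fin q, FF q x c = Real.sqrt q := by
  have hq0 : (q : ℝ) ≠ 0 := by positivity
  have hs : Real.sqrt q ≠ 0 := by
    simp [Real.sqrt_ne_zero', Nat.cast_pos]; omega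
  have hss : Real.sqrt q * Real.sqrt q = q := Real.mul_self_sqrt (by positivity)
  have h1 : ∑ c : Fin q × Fin q, F1 q x c = 0 := by
    rw [Fintype.sum_prod_type]
    simp only [F1, Matrix.of_apply]
    have inner : ∀ y1 : Fin q, ∑ y2 : Fin q, (Real.sqrt q)⁻¹ * (E1 q x y1 + E1 q x y2)
        = (Real.sqrt q)⁻¹ * ((q : ℝ) * E1 q x y1) := by
      intro y1
      rw [← Finset.mul_sum, Finset.sum_add_distrib, sum_E1 q hq, add_zero, Finset.sum_const]
      simp [nsmul_eq_mul]
    simp only [inner]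
    rw [← Finset.mul_sum, ← Finset.mul_sum, sum_E1 q hq, mul_zero, mul_zero]
  have h0 : ∑ c : Fin q × Fin q, F0 q x c = Real.sqrt q := by
    simp only [F0, Matrix.of_apply, Finset.sum_const, Finset.card_univ, Fintype.card_prod,
      Fintype.card_fin, nsmul_eq_mul, Nat.cast_mul]
    field_simp
    nlinarith [hss]
  have : ∑ c : Fin q × Fin q, FF q x c
      = ∑ c : Fin q × Fin q, F0 q x c + ∑ c : Fin q × Fin q, F1 q x c := by
    simp [FF, Matrix.add_apply, Finset.sum_add_distrib]
  rw [this, h0, h1, add_zero]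

lemma sum_Ek (q m k : ℕ) (hq : 1 ≤ q) (x : Fin m → Fin q) :
    ∑ y, Ek q m k x y = if k = 0 then 1 else 0 := by
  simp only [Ek, Matrix.of_apply]
  rw [Finset.sum_comm]
  have key : ∀ S ∈ Finset.powersetCard k (Finset.univ : Finset (Fin m)),
      (∑ y : Fin m → Fin q, ∏ i, (if i ∈ S then E1 q (x i) (y i) else E0 q (x i) (y i)))
        = if S = ∅ then 1 else 0 := by
    intro S _
    rw [← Fintype.prod_sum fun i z => (if i ∈ S then E1 q (x i) z else E0 q (x i) z)]
    by_cases hS : S = ∅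
    · simp [hS, sum_E0 q hq]
    · obtain ⟨i, hi⟩ := Finset.nonempty_iff_ne_empty.2 hS
      rw [if_neg hS]
      apply Finset.prod_eq_zero (Finset.mem_univ i)
      simp only [hi, if_true]
      exact sum_E1 q hq (x i)
  rw [Finset.sum_congr rfl key]
  by_cases hk : k = 0
  · subst hk
    simp [Finset.powersetCard_zero]
  · rw [if_neg hk]
    apply Finset.sum_eq_zero
    intro S hS
    rw [if_neg]
    rintro rfl
    rw [Finset.mem_powersetCard] at hS
    simp [Finset.card_empty] at hS
    omega


section Fill
variable {n q : ℕ}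

lemma card_compl_ab (a b : Fin n) (h : a ≠ b) : (({a, b}ᶜ : Finset (Fin n))).card = n - 2 := by
  rw [Finset.card_compl, Finset.card_pair h, Fintype.card_fin]

lemma mem_compl_ab (a b : Fin n) (z : Fin n) : z ∈ ({a, b}ᶜ : Finset (Fin n)) ↔ z ≠ a ∧ z ≠ b := by
  simp [not_or]

def fill (a b : Fin n) (h : a ≠ b) (v1 v2 : Fin q) (w : Fin (n - 2) → Fin q) : Fin n → Fin q := fun z =>
  if hz : z = a then v1 else if hz' : z = b then v2 else
    w ((({a, b}ᶜ : Finset (Fin n)).orderIsoOfFin (card_compl_ab a b h)).symm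
      ⟨z, (mem_compl_ab a b z).2 ⟨hz, hz'⟩⟩)

lemma embCompl_mem (a b : Fin n) (h : a ≠ b) (i : Fin (n - 2)) : embCompl a b h i ∈ ({a, b}ᶜ : Finset (Fin n)) :=
  (({a, b}ᶜ : Finset (Fin n)).orderIsoOfFin (card_compl_ab a b h) i).2

lemma fill_apply_a (a b : Fin n) (h : a ≠ b) (v1 v2 : Fin q) (w : Fin (n - 2) → Fin q) : fill a b h v1 v2 w a = v1 := by
  simp [fill]

lemma fill_apply_b (a b : Fin n) (h : a ≠ b) (v1 v2 : Fin q) (w : Fin (n - 2) → Fin q) : fill a b h v1 v2 w b = v2 := by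
  simp [fill, h.symm]

lemma fill_apply_embCompl (a b : Fin n) (h : a ≠ b) (v1 v2 : Fin q) (w : Fin (n - 2) → Fin q) (i : Fin (n - 2)) :
    fill a b h v1 v2 w (embCompl a b h i) = w i := by
  have hm := embCompl_mem a b h i
  rw [mem_compl_ab] at hm
  simp only [fill, dif_neg hm.1, dif_neg hm.2]
  congr 1
  have : (⟨embCompl a b h i, (mem_compl_ab a b _).2 hm⟩ :
      {x // x ∈ ({a, b}ᶜ : Finset (Fin n))}) =
      (({a, b}ᶜ : Finset (Fin n)).orderIsoOfFin (card_compl_ab a b h)) i := by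
    apply Subtype.ext; rfl
  rw [this, OrderIso.symm_apply_apply]

lemma fill_eq_self (a b : Fin n) (h : a ≠ b) (y : Fin n → Fin q) :
    fill a b h (y a) (y b) (fun i => y (embCompl a b h i)) = y := by
  funext z
  by_cases hz : z = a
  · rw [hz]; exact fill_apply_a a b h _ _ _
  by_cases hz' : z = b
  · rw [hz']; exact fill_apply_b a b h _ _ _
  · simp only [fill, dif_neg hz, dif_neg hz']
    have : embCompl a b h ((({a, b}ᶜ : Finset (Fin n)).orderIsoOfFin
        (card_compl_ab a b h)).symm ⟨z, (mem_compl_ab a b z).2 ⟨hz, hz'⟩⟩) = z := by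
      simp only [embCompl]
      rw [show (({a, b}ᶜ : Finset (Fin n)).orderIsoOfFin
        (by rw [Finset.card_compl, Finset.card_pair h, Fintype.card_fin]))
        = (({a, b}ᶜ : Finset (Fin n)).orderIsoOfFin (card_compl_ab a b h)) from rfl]
      rw [OrderIso.apply_symm_apply]
    rw [this]

/-- Full coordinates equivalence. -/
def eqvFull (a b : Fin n) (h : a ≠ b) : (Fin n → Fin q) ≃ (Fin q × Fin q) × (Fin (n - 2) → Fin q) where
  toFun y := ((y a, y b), fun i => y (embCompl a b h i))
  invFun c := fill a b h c.1.1 c.1.2 c.2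
  left_inv y := fill_eq_self a b h y
  right_inv c := by
    obtain ⟨⟨v1, v2⟩, w⟩ := c
    simp only
    refine Prod.ext (Prod.ext ?_ ?_) ?_
    · exact fill_apply_a a b h _ _ _
    · exact fill_apply_b a b h _ _ _
    · funext i; exact fill_apply_embCompl a b h _ _ _ i

/-- Diagonal coordinates equivalence. -/
def eqvDiag (a b : Fin n) (h : a ≠ b) : {x : Fin n → Fin q // x a = x b} ≃ Fin q × (Fin (n - 2) → Fin q) where
  toFun x := (x.1 a, fun i => x.1 (embCompl a b h i))
  invFun c := ⟨fill a b h c.1 c.1 c.2, by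
    rw [fill_apply_a, fill_apply_b]⟩
  left_inv x := by
    apply Subtype.ext
    have := fill_eq_self a b h x.1
    rw [← x.2] at this
    exact this
  right_inv c := by
    obtain ⟨v, w⟩ := c
    refine Prod.ext ?_ ?_
    · exact fill_apply_a a b h _ _ _
    · funext i; exact fill_apply_embCompl a b h _ _ _ i

end Fill
end ED

namespace ED

-- row sum of G
lemma sum_G_row (n q : ℕ) (hn : 2 ≤ n) (hq : 1 ≤ q) (α : ℕ → ℝ)
    (r : Fin q × (Fin (n - 2) → Fin q)) :
    ∑ c : (Fin q × Fin q) × (Fin (n - 2) → Fin q),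
      (∑ k ∈ Finset.range (n - 1), α k * (FF q r.1 c.1 * Ek q (n - 2) k r.2 c.2))
      = α 0 * Real.sqrt q := by
  rw [Finset.sum_comm]
  have step : ∀ k ∈ Finset.range (n - 1),
      (∑ c : (Fin q × Fin q) × (Fin (n - 2) → Fin q),
        α k * (FF q r.1 c.1 * Ek q (n - 2) k r.2 c.2))
      = α k * (Real.sqrt q * if k = 0 then 1 else 0) := by
    intro k _
    rw [← Finset.mul_sum]
    congr 1
    rw [Fintype.sum_prod_type]
    rw [← sum_FF q hq r.1, ← sum_Ek q (n - 2) k hq r.2, Finset.sum_mul_sum]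
  rw [Finset.sum_congr rfl step]
  have h0 : 0 ∈ Finset.range (n - 1) := by simp; omega
  rw [Finset.sum_eq_single_of_mem 0 h0]
  · simp [mul_comm]
  · intro k _ hk
    simp [hk]

-- each entry of Γ'. mulVec u
lemma row_val (n q : ℕ) (hn : 2 ≤ n) (hq : 1 ≤ q) (α : ℕ → ℝ)
    (a b : Fin n) (h : a ≠ b) (x : {x : Fin n → Fin q // x a = x b}) :
    ∑ y : Fin n → Fin q,
      subMat (Matrix.of fun r c =>
        ∑ k ∈ Finset.range (n - 1), α k * (FF q r.1 c.1 * Ek q (n - 2) k r.2 c.2)) a b h x y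
      = α 0 * Real.sqrt q := by
  rw [← sum_G_row n q hn hq α (x.1 a, fun i => x.1 (embCompl a b h i))]
  exact Fintype.sum_equiv (eqvFull a b h) _ _ (fun y => rfl)

end ED

namespace ED

lemma card_lt_fiber (n : ℕ) (b : Fin n) : Fintype.card {a : Fin n // a < b} = b := by
  rw [Fintype.card_subtype]
  have : (Finset.univ.filter fun a : Fin n => a < b) = Finset.Iio b := by
    ext z; simp
  rw [this, Fin.card_Iio]

lemma two_mul_cardP (n : ℕ) :
    2 * Fintype.card {p : Fin n × Fin n // p.1 < p.2} = n * (n - 1) := by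
  have e : {p : Fin n × Fin n // p.1 < p.2} ≃ Σ b : Fin n, {a : Fin n // a < b} :=
    { toFun := fun p => ⟨p.1.2, p.1.1, p.2⟩
      invFun := fun s => ⟨(s.2.1, s.1), s.2.2⟩
      left_inv := fun p => rfl
      right_inv := fun s => rfl }
  rw [Fintype.card_congr e, Fintype.card_sigma]
  simp only [card_lt_fiber]
  rw [Fin.sum_univ_eq_sum_range (fun i => i) n, mul_comm]
  exact Finset.sum_range_id_mul_two n

lemma card_diag (n q : ℕ) (a b : Fin n) (h : a ≠ b) :
    Fintype.card {x : Fin n → Fin q // x a = x b} = q * q ^ (n - 2) := by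
  rw [Fintype.card_congr (eqvDiag a b h)]
  simp [Fintype.card_fun]

end ED

open ED in
/-- For `G = Σ_k α_k (F ⊗ E_k^{(n−2)})` and `Γ′` the stacking of the `G_{a,b}`,
with `u` the unit vector with all entries `q^{−n/2}`, one has
`‖Γ′ u‖₂ = |α₀| √(n(n−1)/2)`; in particular `‖Γ′‖ ≥ |α₀| √(n(n−1)/2)`. -/
theorem stmt9 (n q : ℕ) (hn : 2 ≤ n) (hq : 1 ≤ q) (α : ℕ → ℝ)
    (Γ' : Matrix ((p : {p : Fin n × Fin n // p.1 < p.2}) ×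
        {x : Fin n → Fin q // x p.1.1 = x p.1.2}) (Fin n → Fin q) ℝ)
    (hΓ' : Γ' = stacked (Matrix.of fun r c =>
        ∑ k ∈ Finset.range (n - 1), α k * (FF q r.1 c.1 * Ek q (n - 2) k r.2 c.2)))
    (u : (Fin n → Fin q) → ℝ) (hu : u = fun _ => (Real.sqrt q ^ n)⁻¹) :
    Real.sqrt (∑ r, (Γ'.mulVec u r) ^ 2)
        = |α 0| * Real.sqrt ((n : ℝ) * ((n : ℝ) - 1) / 2) ∧
    |α 0| * Real.sqrt ((n : ℝ) * ((n : ℝ) - 1) / 2) ≤ specNorm Γ' := by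
  have hq0 : (0 : ℝ) < (q : ℝ) := by
    have : 0 < q := hq
    exact_mod_cast this
  have hsq : Real.sqrt q * Real.sqrt q = (q : ℝ) := Real.mul_self_sqrt hq0.le
  have hsqpos : (0 : ℝ) < Real.sqrt q := Real.sqrt_pos.2 hq0
  -- value of each coordinate of Γ' *ᵥ u
  have hrow : ∀ r, Γ'.mulVec u r = α 0 * Real.sqrt q * (Real.sqrt q ^ n)⁻¹ := by
    intro r
    rw [hΓ', hu]
    simp only [Matrix.mulVec, dotProduct]
    simp only [stacked, Matrix.of_apply]
    rw [← Finset.sum_mul]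
    rw [row_val n q hn hq α r.1.1.1 r.1.1.2 (ne_of_lt r.1.2) r.2]
  -- the sum of squares
  have hcardP : ((Fintype.card {p : Fin n × Fin n // p.1 < p.2} : ℕ) : ℝ)
      = (n : ℝ) * ((n : ℝ) - 1) / 2 := by
    have h2 := two_mul_cardP n
    have h1n : 1 ≤ n := by omega
    have h2' := congrArg (Nat.cast : ℕ → ℝ) h2
    push_cast [Nat.cast_sub h1n] at h2'
    linarith
  have hpow : (Real.sqrt q ^ n) * (Real.sqrt q ^ n) = (q : ℝ) ^ n := by
    rw [← mul_pow, hsq]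
  have e1 : ((Real.sqrt q ^ n)⁻¹) ^ 2 = ((q : ℝ) ^ n)⁻¹ := by
    rw [inv_pow, sq, hpow]
  have hsum : ∑ r, (Γ'.mulVec u r) ^ 2
      = ((n : ℝ) * ((n : ℝ) - 1) / 2) * (α 0) ^ 2 := by
    simp only [hrow]
    rw [Finset.sum_const, Finset.card_univ, nsmul_eq_mul]
    have hcard : (Fintype.card ((p : {p : Fin n × Fin n // p.1 < p.2}) ×
        {x : Fin n → Fin q // x p.1.1 = x p.1.2}) : ℝ)
        = ((n : ℝ) * ((n : ℝ) - 1) / 2) * ((q : ℝ) * (q : ℝ) ^ (n - 2)) := by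
      rw [Fintype.card_sigma]
      have : ∀ p : {p : Fin n × Fin n // p.1 < p.2},
          Fintype.card {x : Fin n → Fin q // x p.1.1 = x p.1.2} = q * q ^ (n - 2) :=
        fun p => card_diag n q p.1.1 p.1.2 (ne_of_lt p.2)
      rw [Finset.sum_congr rfl fun p _ => this p, Finset.sum_const, Finset.card_univ,
        smul_eq_mul]
      push_cast
      rw [hcardP]
    rw [hcard]
    have hval : (α 0 * Real.sqrt q * (Real.sqrt q ^ n)⁻¹) ^ 2
        = (α 0) ^ 2 * (q : ℝ) * ((q : ℝ) ^ n)⁻¹ := by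
      rw [mul_pow, mul_pow, e1]
      rw [show Real.sqrt q ^ 2 = (q : ℝ) by rw [sq, hsq]]
    rw [hval]
    have hq2 : (q : ℝ) * (q : ℝ) ^ (n - 2) * (q : ℝ) = (q : ℝ) ^ n := by
      rw [mul_comm ((q:ℝ)) ((q:ℝ) ^ (n - 2)), mul_assoc, ← sq, ← pow_add]
      congr 1
      omega
    rw [← hq2]
    have hqq : (q : ℝ) ^ (n - 2) ≠ 0 := by positivity
    field_simp
  have hfirst : Real.sqrt (∑ r, (Γ'.mulVec u r) ^ 2)
      = |α 0| * Real.sqrt ((n : ℝ) * ((n : ℝ) - 1) / 2) := by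
    rw [hsum, mul_comm, Real.sqrt_mul (by positivity), Real.sqrt_sq_eq_abs, mul_comm]
  refine ⟨hfirst, ?_⟩
  -- spectral norm bound
  set v : EuclideanSpace ℝ (Fin n → Fin q) := (WithLp.equiv 2 _).symm u with hv
  have hAv : Matrix.toEuclideanLin Γ' v = (WithLp.equiv 2 _).symm (Γ'.mulVec u) := rfl
  have hnormAv : ‖Matrix.toEuclideanLin Γ' v‖ = Real.sqrt (∑ r, (Γ'.mulVec u r) ^ 2) := by
    rw [hAv, EuclideanSpace.norm_eq]
    congr 1
    apply Finset.sum_congr rfl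
    intro r _
    rw [Real.norm_eq_abs, sq_abs]
    rfl
  have hnormv : ‖v‖ = 1 := by
    rw [hv, EuclideanSpace.norm_eq]
    have : ∀ y : Fin n → Fin q, ‖((WithLp.equiv 2 ((Fin n → Fin q) → ℝ)).symm u) y‖ ^ 2
        = ((q : ℝ) ^ n)⁻¹ := by
      intro y
      rw [hu]
      rw [Real.norm_eq_abs, sq_abs]
      exact e1
    rw [Finset.sum_congr rfl fun y _ => this y, Finset.sum_const, Finset.card_univ,
      nsmul_eq_mul, Fintype.card_fun, Fintype.card_fin, Fintype.card_fin]
    push_cast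
    rw [mul_inv_cancel₀ (by positivity), Real.sqrt_one]
  calc |α 0| * Real.sqrt ((n : ℝ) * ((n : ℝ) - 1) / 2)
      = ‖Matrix.toEuclideanLin Γ' v‖ := by rw [hnormAv, hfirst]
    _ ≤ specNorm Γ' * ‖v‖ := by
        have := (LinearMap.toContinuousLinearMap (Matrix.toEuclideanLin Γ')).le_opNorm v
        simpa [specNorm] using this
    _ = specNorm Γ' := by rw [hnormv, mul_one]
end
end
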